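/- Consider the deterministic n × n gridworld with N = n² states, absorbing target t, trap set Z, target reward R_T > 0, discount γ ∈ (0,1), Bellman operator H, and optimal action-value function Q*. Let q ≥ 2 divide n, partition the grid into m = q² equal axis-aligned square cores C_1, …, C_m, and let H^hm be the assembled strict-decomposition Bellman operator. Assume every non-target state has a trap-free path to t of length at most D_T. Then the deviation Dev(H^hm) := (1/(4N)) ∑_{s ∈ S} ∑_{a ∈ A} ((H^hm Q*)(s,a) − Q*(s,a))² satisfies Dev(H^hm) ≥ ([√N (√m − 1) − 2]_+ / N) · γ^{2 D_T} R_T², where [x]_+ := max{x, 0}. -/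

import Mathlib

/-- The four actions of the gridworld: unit moves up, down, left, right. -/
inductive Act : Type
  | up | down | left | right
deriving DecidableEq

instance : Fintype Act :=
  ⟨{Act.up, Act.down, Act.left, Act.right}, fun x => by cases x <;> simp⟩

instance : Nonempty Act := ⟨Act.up⟩

/-- The clamped unit move on the `n × n` grid: an attempted move off the grid
leaves the state unchanged. -/
def Act.move {n : ℕ} (s : Fin n × Fin n) : Act → Fin n × Fin n
  | .up => (⟨s.1.1 - 1, by have := s.1.2; omega⟩, s.2)
  | .down => (⟨if s.1.1 + 1 < n then s.1.1 + 1 else s.1.1, by have := s.1.2; split <;> omega⟩, s.2)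
  | .left => (s.1, ⟨s.2.1 - 1, by have := s.2.2; omega⟩)
  | .right => (s.1, ⟨if s.2.1 + 1 < n then s.2.1 + 1 else s.2.1, by have := s.2.2; split <;> omega⟩)

/-- The deterministic successor map with absorbing target `t`. -/
def gridStep {n : ℕ} (t : Fin n × Fin n) (s : Fin n × Fin n) (a : Act) : Fin n × Fin n :=
  if s = t then t else Act.move s a

/-- Successor-based rewards: entering the target `t` gives `R_T`, entering a trap `z ∈ Z`
gives `−R_Z(z)`, all other transitions give zero, and `r(t,a,t) = 0`. -/
noncomputable def gridReward {n : ℕ} (t : Fin n × Fin n) (Z : Finset (Fin n × Fin n))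
    (RT : ℝ) (RZ : Fin n × Fin n → ℝ) (s : Fin n × Fin n) (a : Act) : ℝ :=
  if s = t then 0
  else if gridStep t s a = t then RT
  else if gridStep t s a ∈ Z then -RZ (gridStep t s a)
  else 0

/-- `V_Q(s) = max_a Q(s,a)`. -/
noncomputable def VQ {n : ℕ} (Q : Fin n × Fin n → Act → ℝ) (s : Fin n × Fin n) : ℝ :=
  Finset.univ.sup' Finset.univ_nonempty (Q s)

/-- The Bellman optimality operator `(HQ)(s,a) = r(s,a,f(s,a)) + γ V_Q(f(s,a))`. -/
noncomputable def gridBellman {n : ℕ} (t : Fin n × Fin n) (Z : Finset (Fin n × Fin n))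
    (RT : ℝ) (RZ : Fin n × Fin n → ℝ) (γ : ℝ)
    (Q : Fin n × Fin n → Act → ℝ) (s : Fin n × Fin n) (a : Act) : ℝ :=
  gridReward t Z RT RZ s a + γ * VQ Q (gridStep t s a)

/-- Two states lie in the same axis-aligned square core of side `n/q`
(the grid being partitioned into `m = q²` such cores). -/
def sameCore (n q : ℕ) (s s' : Fin n × Fin n) : Prop :=
  s.1.1 / (n / q) = s'.1.1 / (n / q) ∧ s.2.1 / (n / q) = s'.2.1 / (n / q)

instance {n q : ℕ} (s s' : Fin n × Fin n) : Decidable (sameCore n q s s') :=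
  inferInstanceAs (Decidable (_ ∧ _))

/-- The assembled strict-decomposition Bellman operator
`(H^hm Q)(s,a) = r(s,a,f(s,a)) + γ·1{f(s,a) ∈ C_{i(s)}}·V_Q(f(s,a))`. -/
noncomputable def gridBellmanHM {n : ℕ} (q : ℕ) (t : Fin n × Fin n)
    (Z : Finset (Fin n × Fin n)) (RT : ℝ) (RZ : Fin n × Fin n → ℝ) (γ : ℝ)
    (Q : Fin n × Fin n → Act → ℝ) (s : Fin n × Fin n) (a : Act) : ℝ :=
  gridReward t Z RT RZ s a +
    γ * (if sameCore n q (gridStep t s a) s then VQ Q (gridStep t s a) else 0)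

/-- A trap-free path from `u` to `t` of length `d ≥ 1`: a sequence
`u = p 0, p 1, …, p d = t` following the successor map, whose intermediate states
avoid `Z ∪ {t}`. -/
def TrapFreePath {n : ℕ} (t : Fin n × Fin n) (Z : Finset (Fin n × Fin n))
    (u : Fin n × Fin n) (d : ℕ) : Prop :=
  ∃ (p : ℕ → Fin n × Fin n) (acts : ℕ → Act),
    p 0 = u ∧ p d = t ∧
    (∀ j < d, p (j + 1) = gridStep t (p j) (acts j)) ∧
    (∀ j, 1 ≤ j → j ≤ d - 1 → p j ∉ Z ∧ p j ≠ t)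

section Aux

variable {n : ℕ} (t : Fin n × Fin n) (Z : Finset (Fin n × Fin n))
    (RT : ℝ) (RZ : Fin n × Fin n → ℝ) (γ : ℝ)
    (Qstar : Fin n × Fin n → Act → ℝ)

lemma le_VQ (Q : Fin n × Fin n → Act → ℝ) (s : Fin n × Fin n) (a : Act) :
    Q s a ≤ VQ Q s :=
  Finset.le_sup' (Q s) (Finset.mem_univ a)

lemma VQ_t_eq_zero (hγ : γ ≠ 1)
    (hfix : ∀ s a, gridBellman t Z RT RZ γ Qstar s a = Qstar s a) :
    VQ Qstar t = 0 := by
  have h1 : ∀ a, Qstar t a = γ * VQ Qstar t := by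
    intro a
    rw [← hfix]
    simp [gridBellman, gridReward, gridStep]
  have h2 : VQ Qstar t = γ * VQ Qstar t := by
    apply le_antisymm
    · exact Finset.sup'_le _ _ (fun a _ => le_of_eq (h1 a))
    · rw [← h1 Act.up]
      exact le_VQ Qstar t Act.up
  have := sub_eq_zero.mpr h2.symm
  have h3 : VQ Qstar t * (γ - 1) = 0 := by ring_nf; linarith [h2]
  rcases mul_eq_zero.mp h3 with h | h
  · exact h
  · exact absurd (by linarith) hγ

lemma path_value (hγ0 : 0 < γ)
    (hfix : ∀ s a, gridBellman t Z RT RZ γ Qstar s a = Qstar s a)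
    (hVt : VQ Qstar t = 0)
    (d : ℕ) (hd : 1 ≤ d) (u : Fin n × Fin n) (hu : u ≠ t)
    (hp : TrapFreePath t Z u d) :
    γ ^ (d - 1) * RT ≤ VQ Qstar u := by
  obtain ⟨p, acts, hp0, hpd, hstep, hmid⟩ := hp
  have hne : ∀ j, j ≤ d - 1 → p j ≠ t := by
    intro j hj
    rcases Nat.eq_zero_or_pos j with rfl | hj1
    · rw [hp0]; exact hu
    · exact (hmid j hj1 hj).2
  have key : ∀ k, k ≤ d - 1 → γ ^ k * RT ≤ VQ Qstar (p (d - 1 - k)) := by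
    intro k
    induction k with
    | zero =>
      intro _
      have hlt : d - 1 < d := by omega
      have hst : gridStep t (p (d-1)) (acts (d-1)) = t := by
        rw [← hstep (d-1) hlt]
        have : d - 1 + 1 = d := by omega
        rw [this, hpd]
      have hQ : Qstar (p (d-1)) (acts (d-1)) = RT := by
        rw [← hfix]
        simp [gridBellman, gridReward, hst, hne (d-1) le_rfl, hVt]
      calc γ ^ 0 * RT = RT := by ring
        _ = Qstar (p (d-1)) (acts (d-1)) := hQ.symm
        _ ≤ _ := by simpa using le_VQ Qstar (p (d-1-0)) (acts (d-1))
    | succ k ih =>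
      intro hk
      set j := d - 1 - (k+1) with hj
      have hj1 : j + 1 = d - 1 - k := by omega
      have hjlt : j < d := by omega
      have hsucc : p (j+1) = gridStep t (p j) (acts j) := hstep j hjlt
      have hmidj : p (j+1) ∉ Z ∧ p (j+1) ≠ t := hmid (j+1) (by omega) (by omega)
      have hQ : Qstar (p j) (acts j) = γ * VQ Qstar (p (j+1)) := by
        rw [← hfix]
        simp [gridBellman, gridReward, ← hsucc, hmidj.1, hmidj.2, hne j (by omega)]
      have ihk : γ ^ k * RT ≤ VQ Qstar (p (j+1)) := by
        rw [hj1]; exact ih (by omega)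
      calc γ ^ (k+1) * RT = γ * (γ ^ k * RT) := by ring
        _ ≤ γ * VQ Qstar (p (j+1)) := by
            exact mul_le_mul_of_nonneg_left ihk (le_of_lt hγ0)
        _ = Qstar (p j) (acts j) := hQ.symm
        _ ≤ _ := le_VQ Qstar (p j) (acts j)
  have := key (d-1) le_rfl
  simpa [hp0, Nat.sub_self] using this

end Aux

lemma sum_lb_aux {α β : Type*} [Fintype α] [Fintype β] [DecidableEq β]
    (F : β → ℝ) (hF : ∀ s, 0 ≤ F s) (ι g : α → β)
    (hι : Function.Injective ι) (hg : Function.Injective g)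
    (t : β) (c : ℝ) (hc : 0 ≤ c)
    (key : ∀ p, ι p ≠ t → g p ≠ t → c ≤ F (ι p)) :
    max ((Fintype.card α : ℝ) - 2) 0 * c ≤ ∑ s, F s := by
  classical
  set G : Finset α := Finset.univ.filter (fun p => ι p ≠ t ∧ g p ≠ t) with hG
  have hcard : (Fintype.card α : ℝ) - 2 ≤ (G.card : ℝ) := by
    have hcompl : Finset.univ.filter (fun p => ¬(ι p ≠ t ∧ g p ≠ t)) ⊆
        Finset.univ.filter (fun p => ι p = t) ∪ Finset.univ.filter (fun p => g p = t) := by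
      intro p hp
      simp only [Finset.mem_filter, Finset.mem_univ, true_and] at hp
      simp only [Finset.mem_union, Finset.mem_filter, Finset.mem_univ, true_and]
      tauto
    have h1 : (Finset.univ.filter (fun p => ι p = t)).card ≤ 1 := by
      apply Finset.card_le_one.mpr
      intro a ha b hb
      simp only [Finset.mem_filter] at ha hb
      exact hι (ha.2.trans hb.2.symm)
    have h2 : (Finset.univ.filter (fun p => g p = t)).card ≤ 1 := by
      apply Finset.card_le_one.mpr
      intro a ha b hb
      simp only [Finset.mem_filter] at ha hb
      exact hg (ha.2.trans hb.2.symm)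
    have hsplit : G.card + (Finset.univ.filter (fun p => ¬(ι p ≠ t ∧ g p ≠ t))).card
        = Fintype.card α := by
      rw [hG, Finset.card_filter_add_card_filter_not]
      exact Finset.card_univ
    have hle : (Finset.univ.filter (fun p => ¬(ι p ≠ t ∧ g p ≠ t))).card ≤ 2 := by
      calc _ ≤ _ := Finset.card_le_card hcompl
        _ ≤ _ := Finset.card_union_le _ _
        _ ≤ 2 := by omega
    have : Fintype.card α ≤ G.card + 2 := by omega
    have := Nat.cast_le (α := ℝ) |>.mpr this
    push_cast at this
    linarith
  have hsum : (G.card : ℝ) * c ≤ ∑ s, F s := by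
    calc (G.card : ℝ) * c = ∑ _p ∈ G, c := by rw [Finset.sum_const, nsmul_eq_mul]
      _ ≤ ∑ p ∈ G, F (ι p) := by
          apply Finset.sum_le_sum
          intro p hp
          simp only [hG, Finset.mem_filter] at hp
          exact key p hp.2.1 hp.2.2
      _ = ∑ s ∈ G.image ι, F s := by
          rw [Finset.sum_image]
          intro a _ b _ h
          exact hι h
      _ ≤ ∑ s, F s := by
          apply Finset.sum_le_sum_of_subset_of_nonneg (Finset.subset_univ _)
          intro s _ _
          exact hF s
  rcases le_or_gt ((Fintype.card α : ℝ) - 2) 0 with h | h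
  · rw [max_eq_right h]
    simp only [zero_mul]
    calc (0:ℝ) ≤ (G.card : ℝ) * c := by positivity
      _ ≤ _ := hsum
  · rw [max_eq_left (le_of_lt h)]
    calc _ ≤ (G.card : ℝ) * c := mul_le_mul_of_nonneg_right hcard hc
      _ ≤ _ := hsum
lemma action_bound {n q DT : ℕ} (hq : 2 ≤ q)
    (t : Fin n × Fin n) (Z : Finset (Fin n × Fin n))
    (RT : ℝ) (hRT : 0 < RT) (RZ : Fin n × Fin n → ℝ)
    (γ : ℝ) (hγ0 : 0 < γ) (hDT : 1 ≤ DT)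
    (Qstar : Fin n × Fin n → Act → ℝ)
    (hfix : ∀ s a, gridBellman t Z RT RZ γ Qstar s a = Qstar s a)
    (hVlb : ∀ u : Fin n × Fin n, u ≠ t → γ ^ (DT - 1) * RT ≤ VQ Qstar u)
    (a : Act) (ι g : Fin (q-1) × Fin n → Fin n × Fin n)
    (hι : Function.Injective ι) (hg : Function.Injective g)
    (hmove : ∀ p, Act.move (ι p) a = g p)
    (hcross : ∀ p, ¬ sameCore n q (g p) (ι p)) :
    max ((n : ℝ) * ((q : ℝ) - 1) - 2) 0 * (γ ^ (2 * DT) * RT ^ 2) ≤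
      ∑ s : Fin n × Fin n, (gridBellmanHM q t Z RT RZ γ Qstar s a - Qstar s a) ^ 2 := by
  have hcard : (Fintype.card (Fin (q-1) × Fin n) : ℝ) = (n : ℝ) * ((q : ℝ) - 1) := by
    simp only [Fintype.card_prod, Fintype.card_fin]
    push_cast [Nat.cast_sub (show 1 ≤ q by omega)]
    ring
  rw [← hcard]
  apply sum_lb_aux _ (fun s => sq_nonneg _) ι g hι hg t _ (by positivity)
  intro p h1 h2
  set s := ι p with hs
  have hstep : gridStep t s a = Act.move s a := by
    simp [gridStep, h1]
  have hcr : ¬ sameCore n q (gridStep t s a) s := by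
    rw [hstep, hmove]; exact hcross p
  have hmt : Act.move s a ≠ t := by rw [hmove]; exact h2
  have hdiff : gridBellmanHM q t Z RT RZ γ Qstar s a - Qstar s a
      = -(γ * VQ Qstar (Act.move s a)) := by
    rw [← hfix s a]
    simp only [gridBellmanHM, gridBellman, hstep,
      if_neg (show ¬ sameCore n q (Act.move s a) s by rw [hmove]; exact hcross p)]
    ring
  rw [hdiff]
  have hV : γ ^ (DT - 1) * RT ≤ VQ Qstar (Act.move s a) := hVlb _ hmt
  have h0 : (0:ℝ) ≤ γ ^ (DT - 1) * RT := by positivity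
  calc γ ^ (2 * DT) * RT ^ 2 = γ ^ 2 * (γ ^ (DT - 1) * RT) ^ 2 := by
        rw [mul_pow, ← pow_mul, ← mul_assoc, ← pow_add]
        congr 2
        omega
    _ ≤ γ ^ 2 * (VQ Qstar (Act.move s a)) ^ 2 := by
        apply mul_le_mul_of_nonneg_left (pow_le_pow_left₀ h0 hV 2) (by positivity)
    _ = (-(γ * VQ Qstar (Act.move s a))) ^ 2 := by ring
/-- **Performance decay of the strict-decomposition operator.**
On the deterministic `n × n` gridworld (`N = n²` states) partitioned into `m = q²` equal
square cores, if every non-target state has a trap-free path to `t` of length at most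
`D_T`, then
`Dev(H^hm) = (1/(4N)) ∑_{s,a} ((H^hm Q*)(s,a) − Q*(s,a))²
  ≥ ([√N(√m − 1) − 2]₊ / N) · γ^{2 D_T} R_T²`,
where `√N = n` and `√m = q`. -/
theorem strict_decomposition_performance_decay
    (n q DT : ℕ) (hq : 2 ≤ q) (hqn : q ∣ n)
    (t : Fin n × Fin n) (Z : Finset (Fin n × Fin n)) (htZ : t ∉ Z)
    (RT : ℝ) (hRT : 0 < RT) (RZ : Fin n × Fin n → ℝ) (hRZ : ∀ z ∈ Z, 0 < RZ z)
    (γ : ℝ) (hγ : 0 < γ ∧ γ < 1)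
    (Qstar : Fin n × Fin n → Act → ℝ)
    (hfix : ∀ s a, gridBellman t Z RT RZ γ Qstar s a = Qstar s a)
    (hpath : ∀ s : Fin n × Fin n, s ≠ t → ∃ d, 1 ≤ d ∧ d ≤ DT ∧ TrapFreePath t Z s d) :
    (1 / (4 * (n : ℝ) ^ 2)) *
        ∑ s : Fin n × Fin n, ∑ a : Act,
          (gridBellmanHM q t Z RT RZ γ Qstar s a - Qstar s a) ^ 2
      ≥ (max ((n : ℝ) * ((q : ℝ) - 1) - 2) 0 / (n : ℝ) ^ 2) *
          (γ ^ (2 * DT) * RT ^ 2) := by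
  obtain ⟨hγ0, hγ1⟩ := hγ
  have hn0 : 0 < n := by have := t.1.2; omega
  have hn2 : 2 ≤ n := le_trans hq (Nat.le_of_dvd hn0 hqn)
  have hVt : VQ Qstar t = 0 := VQ_t_eq_zero t Z RT RZ γ Qstar (ne_of_lt hγ1) hfix
  have hDT : 1 ≤ DT := by
    obtain ⟨s0, hs0⟩ := Fintype.exists_ne_of_one_lt_card
      (by simp only [Fintype.card_prod, Fintype.card_fin]; nlinarith) t
    obtain ⟨d, hd1, hdDT, _⟩ := hpath s0 hs0
    omega
  have hVlb : ∀ u : Fin n × Fin n, u ≠ t → γ ^ (DT - 1) * RT ≤ VQ Qstar u := by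
    intro u hu
    obtain ⟨d, hd1, hdDT, hp⟩ := hpath u hu
    have h2 := path_value t Z RT RZ γ Qstar hγ0 hfix hVt d hd1 u hu hp
    calc γ ^ (DT - 1) * RT ≤ γ ^ (d - 1) * RT := by
          apply mul_le_mul_of_nonneg_right _ hRT.le
          exact pow_le_pow_of_le_one hγ0.le hγ1.le (by omega)
      _ ≤ _ := h2
  set c := n / q with hcdef
  have hc : 0 < c := Nat.div_pos (Nat.le_of_dvd hn0 hqn) (by omega)
  have hqc : q * c = n := Nat.mul_div_cancel' hqn
  have hub : ∀ k : ℕ, k < q - 1 → (k + 1) * c < n := by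
    intro k hk
    calc (k+1)*c ≤ (q-1)*c := Nat.mul_le_mul_right c (by omega)
      _ < q*c := by apply Nat.mul_lt_mul_of_lt_of_le (by omega) le_rfl hc
      _ = n := hqc
  have hub' : ∀ k : ℕ, k < q - 1 → (k + 1) * c - 1 < n :=
    fun k hk => lt_of_le_of_lt (Nat.sub_le _ _) (hub k hk)
  have h1le : ∀ k : ℕ, 1 ≤ (k + 1) * c := fun k => Nat.mul_pos (Nat.succ_pos k) hc
  have hqt1 : ∀ k : ℕ, (k + 1) * c / c = k + 1 := fun k => Nat.mul_div_cancel (k+1) hc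
  have hqt2 : ∀ k : ℕ, ((k + 1) * c - 1) / c = k := by
    intro k
    have e : (k+1)*c = c*k + c := by ring
    have h1 : (k+1)*c - 1 = c*k + (c-1) := by omega
    rw [h1, Nat.mul_add_div hc, Nat.div_eq_of_lt (by omega)]
    omega
  have hinj1 : ∀ x y : ℕ, (x + 1) * c = (y + 1) * c → x = y := by
    intro x y h
    have := Nat.eq_of_mul_eq_mul_right hc h
    omega
  -- the four injection pairs
  set ιd : Fin (q-1) × Fin n → Fin n × Fin n :=
    fun p => (⟨(p.1.1+1)*c - 1, hub' _ p.1.2⟩, p.2) with hιd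
  set gd : Fin (q-1) × Fin n → Fin n × Fin n :=
    fun p => (⟨(p.1.1+1)*c, hub _ p.1.2⟩, p.2) with hgd
  set ιr : Fin (q-1) × Fin n → Fin n × Fin n :=
    fun p => (p.2, ⟨(p.1.1+1)*c - 1, hub' _ p.1.2⟩) with hιr
  set gr : Fin (q-1) × Fin n → Fin n × Fin n :=
    fun p => (p.2, ⟨(p.1.1+1)*c, hub _ p.1.2⟩) with hgr
  have hιd_inj : Function.Injective ιd := by
    intro ⟨⟨k, hk⟩, j⟩ ⟨⟨k', hk'⟩, j'⟩ h
    simp only [hιd, Prod.mk.injEq, Fin.mk.injEq] at h ⊢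
    have ha := h1le k; have hb := h1le k'
    exact ⟨hinj1 _ _ (by omega), h.2⟩
  have hgd_inj : Function.Injective gd := by
    intro ⟨⟨k, hk⟩, j⟩ ⟨⟨k', hk'⟩, j'⟩ h
    simp only [hgd, Prod.mk.injEq, Fin.mk.injEq] at h ⊢
    exact ⟨hinj1 _ _ h.1, h.2⟩
  have hιr_inj : Function.Injective ιr := by
    intro ⟨⟨k, hk⟩, j⟩ ⟨⟨k', hk'⟩, j'⟩ h
    simp only [hιr, Prod.mk.injEq, Fin.mk.injEq] at h ⊢
    have ha := h1le k; have hb := h1le k'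
    exact ⟨hinj1 _ _ (by omega), h.1⟩
  have hgr_inj : Function.Injective gr := by
    intro ⟨⟨k, hk⟩, j⟩ ⟨⟨k', hk'⟩, j'⟩ h
    simp only [hgr, Prod.mk.injEq, Fin.mk.injEq] at h ⊢
    exact ⟨hinj1 _ _ h.2, h.1⟩
  have hmoved : ∀ p, Act.move (ιd p) Act.down = gd p := by
    intro ⟨⟨k, hk⟩, j⟩
    have h1 := h1le k
    have h2 := hub k hk
    simp only [hιd, hgd, Act.move, Prod.mk.injEq, Fin.mk.injEq, and_true]
    rw [show (k+1)*c - 1 + 1 = (k+1)*c by omega, if_pos h2]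
  have hmoveu : ∀ p, Act.move (gd p) Act.up = ιd p := fun p => rfl
  have hmover : ∀ p, Act.move (ιr p) Act.right = gr p := by
    intro ⟨⟨k, hk⟩, j⟩
    have h1 := h1le k
    have h2 := hub k hk
    simp only [hιr, hgr, Act.move, Prod.mk.injEq, Fin.mk.injEq, true_and]
    rw [show (k+1)*c - 1 + 1 = (k+1)*c by omega, if_pos h2]
  have hmovel : ∀ p, Act.move (gr p) Act.left = ιr p := fun p => rfl
  have hcrossd : ∀ p, ¬ sameCore n q (gd p) (ιd p) := by
    intro ⟨⟨k, hk⟩, j⟩ hsame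
    simp only [sameCore, hgd, hιd, ← hcdef] at hsame
    rw [hqt1, hqt2] at hsame
    omega
  have hcrossu : ∀ p, ¬ sameCore n q (ιd p) (gd p) := by
    intro ⟨⟨k, hk⟩, j⟩ hsame
    simp only [sameCore, hgd, hιd, ← hcdef] at hsame
    rw [hqt1, hqt2] at hsame
    omega
  have hcrossr : ∀ p, ¬ sameCore n q (gr p) (ιr p) := by
    intro ⟨⟨k, hk⟩, j⟩ hsame
    simp only [sameCore, hgr, hιr, ← hcdef] at hsame
    rw [hqt1, hqt2] at hsame
    omega
  have hcrossl : ∀ p, ¬ sameCore n q (ιr p) (gr p) := by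
    intro ⟨⟨k, hk⟩, j⟩ hsame
    simp only [sameCore, hgr, hιr, ← hcdef] at hsame
    rw [hqt1, hqt2] at hsame
    omega
  have Bd := action_bound hq t Z RT hRT RZ γ hγ0 hDT Qstar hfix hVlb
    Act.down ιd gd hιd_inj hgd_inj hmoved hcrossd
  have Bu := action_bound hq t Z RT hRT RZ γ hγ0 hDT Qstar hfix hVlb
    Act.up gd ιd hgd_inj hιd_inj hmoveu hcrossu
  have Br := action_bound hq t Z RT hRT RZ γ hγ0 hDT Qstar hfix hVlb
    Act.right ιr gr hιr_inj hgr_inj hmover hcrossr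
  have Bl := action_bound hq t Z RT hRT RZ γ hγ0 hDT Qstar hfix hVlb
    Act.left gr ιr hgr_inj hιr_inj hmovel hcrossl
  set M := max ((n : ℝ) * ((q : ℝ) - 1) - 2) 0 with hM
  set K := γ ^ (2 * DT) * RT ^ 2 with hK
  have hsum : 4 * (M * K) ≤ ∑ s : Fin n × Fin n, ∑ a : Act,
      (gridBellmanHM q t Z RT RZ γ Qstar s a - Qstar s a) ^ 2 := by
    rw [Finset.sum_comm]
    rw [show (Finset.univ : Finset Act) = {.up, .down, .left, .right} from rfl]
    rw [show ({.up, .down, .left, .right} : Finset Act)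
        = insert .up (insert .down (insert .left ({.right} : Finset Act))) from rfl]
    rw [Finset.sum_insert (by decide), Finset.sum_insert (by decide),
      Finset.sum_insert (by decide), Finset.sum_singleton]
    linarith [Bd, Bu, Br, Bl]
  rw [ge_iff_le]
  have hn' : (0:ℝ) < (n:ℝ) := by exact_mod_cast hn0
  calc M / (n:ℝ)^2 * K = (1 / (4 * (n:ℝ)^2)) * (4 * (M * K)) := by
        field_simp
    _ ≤ _ := by
        apply mul_le_mul_of_nonneg_left hsum (by positivity)
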